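/- The assignment Ω_* is functorial on path complexes: for weak morphisms f : (V, P) → (V', P') and g : (V', P') → (V'', P''), the induced chain maps satisfy (g∘f)_* = g_* ∘ f_* : Ω_*(P) → Ω_*(P''), and (id_V)_* is the identity chain map on Ω_*(P). -/

import Mathlib

/-!
STATEMENT 9: The assignment Ω_* is functorial on path complexes: for weak morphisms
f : (V, P) → (V', P') and g : (V', P') → (V'', P''), the induced chain maps satisfy
(g∘f)_* = g_* ∘ f_* : Ω_*(P) → Ω_*(P''), and (id_V)_* is the identity chain map on Ω_*(P).
-/

open scoped Classical

namespace PH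

/-- An elementary path (a list of vertices) is regular if no two consecutive
vertices coincide. -/
def Reg {V : Type} (l : List V) : Prop := l.Chain' (· ≠ ·)

/-- The regular boundary operator ∂ on the span of regular paths (all degrees at once,
with the convention that ∂ vanishes on 0-paths): on a basis path `p` of length ≥ 2 it is
the alternating sum of the vertex deletions, with non-regular terms replaced by 0. -/
noncomputable def dReg (K : Type) [Field K] (V : Type) :
    (List V →₀ K) →ₗ[K] (List V →₀ K) :=
  Finsupp.lsum K fun p => LinearMap.toSpanSingleton K (List V →₀ K)
    (if 2 ≤ p.length then
      ∑ q : Fin p.length, ((-1 : K) ^ (q : ℕ)) •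
        (if Reg (p.eraseIdx (q : ℕ)) then Finsupp.single (p.eraseIdx (q : ℕ)) (1 : K) else 0)
    else 0)

/-- The map induced on regular chains by a vertex map f:
`e_{i₀…iₙ} ↦ e_{f(i₀)…f(iₙ)}` if the image path is regular, and 0 otherwise. -/
noncomputable def find (K : Type) [Field K] {V W : Type} (f : V → W) :
    (List V →₀ K) →ₗ[K] (List W →₀ K) :=
  Finsupp.lsum K fun p => LinearMap.toSpanSingleton K (List W →₀ K)
    (if Reg (p.map f) then Finsupp.single (p.map f) (1 : K) else 0)

/-- `A_n(P)`: the span of the regular allowed n-paths (lists of n+1 vertices in P). -/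
def Asub (K : Type) [Field K] {V : Type} (P : Set (List V)) (n : ℕ) :
    Submodule K (List V →₀ K) :=
  Finsupp.supported K K {l | l ∈ P ∧ l.length = n + 1 ∧ Reg l}

/-- `Ω_n(P)`: the ∂-invariant allowed regular n-chains. -/
noncomputable def OmegaSub (K : Type) [Field K] {V : Type} (P : Set (List V)) (n : ℕ) :
    Submodule K (List V →₀ K) :=
  Asub K P n ⊓ Submodule.comap (dReg K V) (Asub K P (n - 1))

/-- The n-cycles of Ω_*(P). -/
noncomputable def Zsub (K : Type) [Field K] {V : Type} (P : Set (List V)) (n : ℕ) :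
    Submodule K (List V →₀ K) :=
  OmegaSub K P n ⊓ LinearMap.ker (dReg K V)

/-- The n-boundaries ∂Ω_{n+1}(P). -/
noncomputable def Bsub (K : Type) [Field K] {V : Type} (P : Set (List V)) (n : ℕ) :
    Submodule K (List V →₀ K) :=
  Submodule.map (dReg K V) (OmegaSub K P (n + 1))

/-- Path homology `H_n(P)`, realized as the image of the n-cycles in the quotient of the
ambient space by the n-boundaries (so `H_n(P) ≅ Z_n/(Z_n ∩ B_n) = Z_n/B_n`). -/
noncomputable def Hsm (K : Type) [Field K] {V : Type} (P : Set (List V)) (n : ℕ) :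
    Submodule K ((List V →₀ K) ⧸ Bsub K P n) :=
  Submodule.map (Bsub K P n).mkQ (Zsub K P n)

/-- A path complex on V: a set of non-empty elementary paths (lists) closed under
removing the last (`dropLast`) or the first (`tail`) vertex. -/
structure PathComplex (V : Type) where
  carrier : Set (List V)
  not_nil : ∀ p ∈ carrier, p ≠ []
  dropLast_mem : ∀ p ∈ carrier, 2 ≤ p.length → p.dropLast ∈ carrier
  tail_mem : ∀ p ∈ carrier, 2 ≤ p.length → p.tail ∈ carrier

end PH

namespace PH

def IsWeakMor {V W : Type} (P : Set (List V)) (S : Set (List W)) (f : V → W) : Prop :=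
  ∀ p ∈ P, p.map f ∈ S ∨ ¬ Reg (p.map f)

end PH

namespace PH

variable {K : Type} [Field K]

lemma Reg.of_map {V W : Type} (g : V → W) {l : List V} (h : Reg (l.map g)) : Reg l := by
  unfold Reg at *
  change List.IsChain _ (l.map g) at h
  rw [List.isChain_map] at h
  exact h.imp fun _ _ hne hab => hne (congrArg g hab)

lemma find_single {V W : Type} (f : V → W) (p : List V) (c : K) :
    find K f (Finsupp.single p c) =
      c • (if Reg (p.map f) then Finsupp.single (p.map f) (1 : K) else 0) := by
  simp [find]

lemma find_comp {V W X : Type} (f : V → W) (g : W → X) (v : List V →₀ K) :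
    find K (g ∘ f) v = find K g (find K f v) := by
  induction v using Finsupp.induction_linear with
  | zero => simp
  | add a b ha hb => simp only [map_add, ha, hb]
  | single p c =>
    rw [find_single, find_single]
    by_cases hr : Reg (p.map f)
    · rw [if_pos hr, Finsupp.smul_single, smul_eq_mul, mul_one, find_single, List.map_map]
    -- collapsing a path under `f` cannot be undone by `g`, so both sides vanish
    · have hr' : ¬ Reg (p.map (g ∘ f)) := fun h => hr (Reg.of_map g (by rwa [List.map_map]))
      rw [if_neg hr', if_neg hr, smul_zero, smul_zero, map_zero]

lemma find_id_of_mem_supported {V : Type} {v : List V →₀ K}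
    (hv : v ∈ Finsupp.supported K K {l : List V | Reg l}) : find K id v = v := by
  rw [Finsupp.supported_eq_span_single] at hv
  induction hv using Submodule.span_induction with
  | mem x hx =>
    obtain ⟨p, hp, rfl⟩ := hx
    simp [find_single, show Reg p from hp]
  | zero => simp
  | add x y _ _ hx hy => rw [map_add, hx, hy]
  | smul a x _ hx => rw [map_smul, hx]

lemma Asub_le_supported_reg {V : Type} (P : Set (List V)) (n : ℕ) :
    Asub K P n ≤ Finsupp.supported K K {l : List V | Reg l} :=
  Finsupp.supported_mono fun _ hl => hl.2.2

end PH

theorem statement9_general (K : Type) [Field K] (V V' V'' : Type)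
    (P : PH.PathComplex V)
    (f : V → V') (g : V' → V'') :
    -- (g ∘ f)_* = g_* ∘ f_* on Ω_*(P)
    (∀ (n : ℕ) (v : List V →₀ K), v ∈ PH.OmegaSub K P.carrier n →
        PH.find K (g ∘ f) v = PH.find K g (PH.find K f v)) ∧
    -- (id_V)_* is the identity chain map on Ω_*(P)
    (∀ (n : ℕ) (v : List V →₀ K), v ∈ PH.OmegaSub K P.carrier n →
        PH.find K (id : V → V) v = v) :=
  ⟨fun _ v _ => PH.find_comp f g v,
    fun n _ hv => PH.find_id_of_mem_supported (PH.Asub_le_supported_reg P.carrier n hv.1)⟩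

theorem statement9 (K : Type) [Field K] (V V' V'' : Type)
    [Fintype V] [Fintype V'] [Fintype V'']
    (P : PH.PathComplex V) (P' : PH.PathComplex V') (P'' : PH.PathComplex V'')
    (h0 : ∀ v : V, [v] ∈ P.carrier) (h0' : ∀ v : V', [v] ∈ P'.carrier)
    (h0'' : ∀ v : V'', [v] ∈ P''.carrier)
    (f : V → V') (g : V' → V'')
    (hf : PH.IsWeakMor P.carrier P'.carrier f)
    (hg : PH.IsWeakMor P'.carrier P''.carrier g) :
    -- (g ∘ f)_* = g_* ∘ f_* on Ω_*(P)
    (∀ (n : ℕ) (v : List V →₀ K), v ∈ PH.OmegaSub K P.carrier n →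
        PH.find K (g ∘ f) v = PH.find K g (PH.find K f v)) ∧
    -- (id_V)_* is the identity chain map on Ω_*(P)
    (∀ (n : ℕ) (v : List V →₀ K), v ∈ PH.OmegaSub K P.carrier n →
        PH.find K (id : V → V) v = v) :=
  statement9_general K V V' V'' P f g
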